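/- Well-definedness of the canonical neighborhood condition: let Λ be a proof system extending M^Δ and s a maximal Λ-consistent set. If |φ| = |φ'| (i.e. φ and φ' belong to exactly the same maximal Λ-consistent sets), then (Δ(φ ∨ ψ) ∈ s for every formula ψ) if and only if (Δ(φ' ∨ ψ) ∈ s for every formula ψ). -/

import Mathlib

/-- The language L(Δ) of contingency logic: φ ::= p | ¬φ | (φ ∧ φ) | Δφ. -/
inductive Formula (P : Type) : Type
  | atom : P → Formula P
  | neg : Formula P → Formula P
  | and : Formula P → Formula P → Formula P
  | delta : Formula P → Formula P

namespace Formula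

variable {P : Type}

/-- φ ∨ ψ abbreviates ¬(¬φ ∧ ¬ψ). -/
def or (φ ψ : Formula P) : Formula P := neg (and (neg φ) (neg ψ))

/-- φ → ψ abbreviates ¬(φ ∧ ¬ψ). -/
def imp (φ ψ : Formula P) : Formula P := neg (and φ (neg ψ))

/-- φ ↔ ψ abbreviates (φ → ψ) ∧ (ψ → φ). -/
def iffF (φ ψ : Formula P) : Formula P := and (imp φ ψ) (imp ψ φ)

end Formula

/-- ⊤ : a fixed tautology (p ∨ ¬p for a fixed propositional variable p). -/
noncomputable def Formula.top (P : Type) [Nonempty P] : Formula P :=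
  Formula.or (Formula.atom (Classical.arbitrary P))
    (Formula.neg (Formula.atom (Classical.arbitrary P)))

/-- A neighborhood model ⟨S, N, V⟩: a nonempty set of states `S`, a neighborhood
function `N : S → P(P(S))` and a valuation `V`. -/
structure NbhdModel (P : Type) where
  S : Type
  nonempty : Nonempty S
  N : S → Set (Set S)
  V : P → Set S

/-- The truth set ⟦φ⟧ of a formula in a neighborhood model; the clause for `Δφ` says
that a state `s` satisfies `Δφ` iff ⟦φ⟧ ∈ N(s) or S ∖ ⟦φ⟧ ∈ N(s). -/
def NbhdModel.truthSet {P : Type} (M : NbhdModel P) : Formula P → Set M.S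
  | .atom p => M.V p
  | .neg φ => (M.truthSet φ)ᶜ
  | .and φ ψ => M.truthSet φ ∩ M.truthSet ψ
  | .delta φ => {s | M.truthSet φ ∈ M.N s ∨ (M.truthSet φ)ᶜ ∈ M.N s}

/-- Satisfaction: M,s ⊨ φ. -/
def NbhdModel.sat {P : Type} (M : NbhdModel P) (s : M.S) (φ : Formula P) : Prop :=
  s ∈ M.truthSet φ

/-- Frame property (m): closure under supersets. -/
def SupersetClosed {S : Type} (N : S → Set (Set S)) : Prop :=
  ∀ s : S, ∀ X Y : Set S, X ∈ N s → X ⊆ Y → Y ∈ N s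

/-- Frame property (c): closure under binary intersections. -/
def InterClosed {S : Type} (N : S → Set (Set S)) : Prop :=
  ∀ s : S, ∀ X Y : Set S, X ∈ N s → Y ∈ N s → X ∩ Y ∈ N s

/-- Frame property (n): contains the unit. -/
def ContainsUnit {S : Type} (N : S → Set (Set S)) : Prop :=
  ∀ s : S, (Set.univ : Set S) ∈ N s

/-- Frame property (z): closure under complements. -/
def ComplClosed {S : Type} (N : S → Set (Set S)) : Prop :=
  ∀ s : S, ∀ X : Set S, X ∈ N s → Xᶜ ∈ N s

/-- The supplementation of a neighborhood function:
`N⁺(s) = {X ⊆ S : Y ⊆ X for some Y ∈ N(s)}`. -/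
def suppN {S : Type} (N : S → Set (Set S)) (s : S) : Set (Set S) :=
  {X | ∃ Y ∈ N s, Y ⊆ X}

/-- `φ` is a substitution instance of a propositional tautology: every Boolean valuation
of formulas that respects `¬` and `∧` (treating atoms and Δ-formulas as atomic) makes
`φ` true. -/
def Tautology {P : Type} (φ : Formula P) : Prop :=
  ∀ v : Formula P → Bool,
    (∀ ψ, v (Formula.neg ψ) = !(v ψ)) →
    (∀ ψ χ, v (Formula.and ψ χ) = (v ψ && v χ)) →
    v φ = true

/-- A proof system of contingency logic, given by its set of theorems: it contains all
propositional tautologies and is closed under modus ponens and the rule REΔ. -/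
structure Sys (P : Type) where
  thm : Set (Formula P)
  taut : ∀ φ : Formula P, Tautology φ → φ ∈ thm
  mp : ∀ φ ψ : Formula P, Formula.imp φ ψ ∈ thm → φ ∈ thm → ψ ∈ thm
  re : ∀ φ ψ : Formula P, Formula.iffF φ ψ ∈ thm →
         Formula.iffF (Formula.delta φ) (Formula.delta ψ) ∈ thm

/-- The system contains the axiom ΔEqu: Δφ ↔ Δ¬φ. -/
def HasDeltaEqu {P : Type} (Λ : Sys P) : Prop :=
  ∀ φ : Formula P,
    Formula.iffF (Formula.delta φ) (Formula.delta (Formula.neg φ)) ∈ Λ.thm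

/-- The system contains the axiom ΔM: Δφ → Δ(φ ∨ ψ) ∨ Δ(¬φ ∨ χ). -/
def HasDeltaM {P : Type} (Λ : Sys P) : Prop :=
  ∀ φ ψ χ : Formula P,
    Formula.imp (Formula.delta φ)
      (Formula.or (Formula.delta (Formula.or φ ψ))
                  (Formula.delta (Formula.or (Formula.neg φ) χ))) ∈ Λ.thm

/-- The system contains the axiom ΔC: (Δφ ∧ Δψ) → Δ(φ ∧ ψ). -/
def HasDeltaC {P : Type} (Λ : Sys P) : Prop :=
  ∀ φ ψ : Formula P,
    Formula.imp (Formula.and (Formula.delta φ) (Formula.delta ψ))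
      (Formula.delta (Formula.and φ ψ)) ∈ Λ.thm

/-- Derivability of `φ` from premises `Γ` in the system `Λ`. -/
inductive SDerivFrom {P : Type} (Λ : Sys P) (Γ : Set (Formula P)) : Formula P → Prop
  | mem {φ} (h : φ ∈ Γ) : SDerivFrom Λ Γ φ
  | thm {φ} (h : φ ∈ Λ.thm) : SDerivFrom Λ Γ φ
  | mp {φ ψ} (h1 : SDerivFrom Λ Γ (Formula.imp φ ψ)) (h2 : SDerivFrom Λ Γ φ) :
      SDerivFrom Λ Γ ψ

/-- `Γ` is Λ-consistent. -/
def SConsistent {P : Type} (Λ : Sys P) (Γ : Set (Formula P)) : Prop :=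
  ¬ ∃ φ : Formula P, SDerivFrom Λ Γ φ ∧ SDerivFrom Λ Γ (Formula.neg φ)

/-- `s` is a maximal Λ-consistent set of formulas. -/
def MCS {P : Type} (Λ : Sys P) (s : Set (Formula P)) : Prop :=
  SConsistent Λ s ∧ ∀ φ : Formula P, φ ∈ s ∨ Formula.neg φ ∈ s

/-- The proof set |φ| = {s ∈ S^Λ : φ ∈ s}, where S^Λ is the set of maximal
Λ-consistent sets. -/
def proofSet {P : Type} (Λ : Sys P) (φ : Formula P) :
    Set {s : Set (Formula P) // MCS Λ s} :=
  {s | φ ∈ s.val}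

/-- The neighborhood function of the minimal canonical model:
N₀^Λ(s) = { |φ| : Δ(φ ∨ ψ) ∈ s for every formula ψ }. -/
def minN {P : Type} (Λ : Sys P) (s : {s : Set (Formula P) // MCS Λ s}) :
    Set (Set {s : Set (Formula P) // MCS Λ s}) :=
  {X | ∃ φ : Formula P,
     X = proofSet Λ φ ∧ ∀ ψ : Formula P, Formula.delta (Formula.or φ ψ) ∈ s.val}

/-
If `|φ| = |φ'|` then `φ ↔ φ'` is a theorem of `Λ`, since otherwise Lindenbaum's
lemma extends `{φ, ¬φ'}` or `{φ', ¬φ}` to a maximal consistent set separating the proof sets.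
Hence `φ ∨ ψ ↔ φ' ∨ ψ` is a theorem for every `ψ`, and by REΔ so is
`Δ(φ ∨ ψ) ↔ Δ(φ' ∨ ψ)`; maximal consistent sets are closed under provable equivalence.
-/

section

variable {P : Type} {Λ : Sys P}

namespace SDerivFrom

theorem mono {Γ Γ' : Set (Formula P)} {φ : Formula P} (hsub : Γ ⊆ Γ')
    (h : SDerivFrom Λ Γ φ) : SDerivFrom Λ Γ' φ := by
  induction h with
  | mem h => exact mem (hsub h)
  | thm h => exact thm h
  | mp _ _ ih₁ ih₂ => exact mp ih₁ ih₂

theorem mem_thm_of_empty {φ : Formula P} (h : SDerivFrom Λ ∅ φ) : φ ∈ Λ.thm := by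
  induction h with
  | mem h => exact absurd h (Set.notMem_empty _)
  | thm h => exact h
  | mp _ _ ih₁ ih₂ => exact Λ.mp _ _ ih₁ ih₂

theorem of_taut {Γ : Set (Formula P)} {φ : Formula P} (h : Tautology φ) :
    SDerivFrom Λ Γ φ :=
  thm (Λ.taut _ h)

theorem taut_mp {Γ : Set (Formula P)} {φ ψ : Formula P} (h : Tautology (φ.imp ψ))
    (hφ : SDerivFrom Λ Γ φ) : SDerivFrom Λ Γ ψ :=
  mp (of_taut h) hφ

theorem taut_mp₂ {Γ : Set (Formula P)} {φ ψ χ : Formula P}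
    (h : Tautology (φ.imp (ψ.imp χ))) (hφ : SDerivFrom Λ Γ φ) (hψ : SDerivFrom Λ Γ ψ) :
    SDerivFrom Λ Γ χ :=
  mp (taut_mp h hφ) hψ

theorem deduction {Γ : Set (Formula P)} {φ ψ : Formula P}
    (h : SDerivFrom Λ (insert φ Γ) ψ) : SDerivFrom Λ Γ (φ.imp ψ) := by
  induction h with
  | @mem χ h =>
    rcases Set.mem_insert_iff.mp h with rfl | h
    · exact of_taut fun v hn ha => by simp only [Formula.imp, hn, ha]; cases v χ <;> rfl
    · exact taut_mp (fun v hn ha => by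
        simp only [Formula.imp, hn, ha]; cases v χ <;> cases v φ <;> rfl) (mem h)
  | @thm χ h =>
    exact taut_mp (fun v hn ha => by
      simp only [Formula.imp, hn, ha]; cases v χ <;> cases v φ <;> rfl) (thm h)
  | @mp χ ρ _ _ ih₁ ih₂ =>
    exact taut_mp₂ (fun v hn ha => by
      simp only [Formula.imp, hn, ha]; cases v φ <;> cases v χ <;> cases v ρ <;> rfl) ih₁ ih₂

theorem cut {Γ : Set (Formula P)} {φ ψ : Formula P} (hφ : SDerivFrom Λ Γ φ)
    (h : SDerivFrom Λ (insert φ Γ) ψ) : SDerivFrom Λ Γ ψ :=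
  mp (deduction h) hφ

theorem of_not_consistent_insert_neg {Γ : Set (Formula P)} {φ : Formula P}
    (h : ¬ SConsistent Λ (insert φ.neg Γ)) : SDerivFrom Λ Γ φ := by
  obtain ⟨χ, hχ, hnχ⟩ := not_not.mp h
  exact taut_mp₂ (fun v hn ha => by
    simp only [Formula.imp, hn, ha]; cases v φ <;> cases v χ <;> rfl)
    (deduction hχ) (deduction hnχ)

theorem exists_finite_subset {Γ : Set (Formula P)} {φ : Formula P}
    (h : SDerivFrom Λ Γ φ) : ∃ Γ₀ ⊆ Γ, Γ₀.Finite ∧ SDerivFrom Λ Γ₀ φ := by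
  induction h with
  | @mem χ h => exact ⟨{χ}, Set.singleton_subset_iff.mpr h, Set.finite_singleton _, mem rfl⟩
  | thm h => exact ⟨∅, Set.empty_subset _, Set.finite_empty, thm h⟩
  | mp _ _ ih₁ ih₂ =>
    obtain ⟨Γ₁, hsub₁, hfin₁, h₁⟩ := ih₁
    obtain ⟨Γ₂, hsub₂, hfin₂, h₂⟩ := ih₂
    exact ⟨Γ₁ ∪ Γ₂, Set.union_subset hsub₁ hsub₂, hfin₁.union hfin₂,
      mp (h₁.mono Set.subset_union_left) (h₂.mono Set.subset_union_right)⟩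

end SDerivFrom

theorem Sys.taut_mp {φ ψ : Formula P} (h : Tautology (φ.imp ψ)) (hφ : φ ∈ Λ.thm) :
    ψ ∈ Λ.thm :=
  Λ.mp _ _ (Λ.taut _ h) hφ

theorem Sys.taut_mp₂ {φ ψ χ : Formula P} (h : Tautology (φ.imp (ψ.imp χ))) (hφ : φ ∈ Λ.thm)
    (hψ : ψ ∈ Λ.thm) : χ ∈ Λ.thm :=
  Λ.mp _ _ (Λ.taut_mp h hφ) hψ

theorem SConsistent.mono {Γ Γ' : Set (Formula P)} (hsub : Γ ⊆ Γ') (h : SConsistent Λ Γ') :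
    SConsistent Λ Γ :=
  fun ⟨χ, hχ, hnχ⟩ => h ⟨χ, hχ.mono hsub, hnχ.mono hsub⟩

theorem SConsistent.insert_of_derivFrom {Γ : Set (Formula P)} {φ : Formula P}
    (h : SConsistent Λ Γ) (hφ : SDerivFrom Λ Γ φ) : SConsistent Λ (insert φ Γ) :=
  fun ⟨χ, hχ, hnχ⟩ => h ⟨χ, hφ.cut hχ, hφ.cut hnχ⟩

theorem isOfFiniteCharacter_sConsistent :
    Order.IsOfFiniteCharacter {Γ : Set (Formula P) | SConsistent Λ Γ} := by
  refine fun Γ => ⟨fun h Γ₀ hsub _ => h.mono hsub, fun h ⟨χ, hχ, hnχ⟩ => ?_⟩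
  obtain ⟨Γ₁, hsub₁, hfin₁, h₁⟩ := hχ.exists_finite_subset
  obtain ⟨Γ₂, hsub₂, hfin₂, h₂⟩ := hnχ.exists_finite_subset
  exact h (Γ₁ ∪ Γ₂) (Set.union_subset hsub₁ hsub₂) (hfin₁.union hfin₂)
    ⟨χ, h₁.mono Set.subset_union_left, h₂.mono Set.subset_union_right⟩

theorem exists_mcs_superset {Γ : Set (Formula P)} (h : SConsistent Λ Γ) :
    ∃ m, Γ ⊆ m ∧ MCS Λ m := by
  obtain ⟨m, hΓm, hmax⟩ := (isOfFiniteCharacter_sConsistent (Λ := Λ)).exists_maximal h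
  refine ⟨m, hΓm, hmax.prop, fun φ => ?_⟩
  by_cases hφ : SDerivFrom Λ m φ
  · exact .inl (hmax.mem_of_prop_insert (hmax.prop.insert_of_derivFrom hφ))
  · exact .inr (hmax.mem_of_prop_insert
      (not_not.mp (mt SDerivFrom.of_not_consistent_insert_neg hφ)))

theorem MCS.mem_of_derivFrom {s : Set (Formula P)} (hs : MCS Λ s) {φ : Formula P}
    (h : SDerivFrom Λ s φ) : φ ∈ s :=
  (hs.2 φ).resolve_right fun hn => hs.1 ⟨φ, h, .mem hn⟩

theorem imp_mem_thm_of_forall_mcs {φ φ' : Formula P}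
    (h : ∀ t, MCS Λ t → φ ∈ t → φ' ∈ t) : φ.imp φ' ∈ Λ.thm := by
  by_contra hnot
  have hcons : SConsistent Λ (insert φ'.neg {φ}) := by
    by_contra hinc
    have hφ' : SDerivFrom Λ {φ} φ' := SDerivFrom.of_not_consistent_insert_neg hinc
    exact hnot (SDerivFrom.deduction (hφ'.mono (by simp))).mem_thm_of_empty
  obtain ⟨m, hsub, hm⟩ := exists_mcs_superset hcons
  exact hm.1 ⟨φ', .mem (h m hm (hsub (by simp))), .mem (hsub (by simp))⟩

theorem iffF_mem_thm_of_proofSet_eq {φ φ' : Formula P} (h : proofSet Λ φ = proofSet Λ φ') :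
    φ.iffF φ' ∈ Λ.thm := by
  have hmem (t : Set (Formula P)) (ht : MCS Λ t) : φ ∈ t ↔ φ' ∈ t :=
    Set.ext_iff.mp h ⟨t, ht⟩
  exact Λ.taut_mp₂ (fun v hn ha => by
      simp only [Formula.imp, Formula.iffF, hn, ha]; cases v φ <;> cases v φ' <;> rfl)
    (imp_mem_thm_of_forall_mcs fun t ht => (hmem t ht).1)
    (imp_mem_thm_of_forall_mcs fun t ht => (hmem t ht).2)

theorem Sys.delta_or_iffF_of_iffF {φ φ' : Formula P} (ψ : Formula P)
    (h : φ.iffF φ' ∈ Λ.thm) : (φ.or ψ).delta.iffF (φ'.or ψ).delta ∈ Λ.thm :=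
  Λ.re _ _ <| Λ.taut_mp (fun v hn ha => by
      simp only [Formula.imp, Formula.iffF, Formula.or, hn, ha]
      cases v φ <;> cases v φ' <;> cases v ψ <;> rfl) h

theorem MCS.mem_iff_of_iffF_mem_thm {s : Set (Formula P)} (hs : MCS Λ s) {φ φ' : Formula P}
    (h : φ.iffF φ' ∈ Λ.thm) : φ ∈ s ↔ φ' ∈ s :=
  ⟨fun hφ => hs.mem_of_derivFrom <| .taut_mp₂ (fun v hn ha => by
      simp only [Formula.imp, Formula.iffF, hn, ha]; cases v φ <;> cases v φ' <;> rfl)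
      (.thm h) (.mem hφ),
   fun hφ' => hs.mem_of_derivFrom <| .taut_mp₂ (fun v hn ha => by
      simp only [Formula.imp, Formula.iffF, hn, ha]; cases v φ <;> cases v φ' <;> rfl)
      (.thm h) (.mem hφ')⟩

end

theorem canonical_condition_well_defined_general {P : Type} (Λ : Sys P)
    (s : Set (Formula P)) (hs : MCS Λ s) (φ φ' : Formula P)
    (h : proofSet Λ φ = proofSet Λ φ') :
    (∀ ψ : Formula P, Formula.delta (Formula.or φ ψ) ∈ s) ↔
    (∀ ψ : Formula P, Formula.delta (Formula.or φ' ψ) ∈ s) :=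
  forall_congr' fun ψ =>
    hs.mem_iff_of_iffF_mem_thm (Sys.delta_or_iffF_of_iffF ψ (iffF_mem_thm_of_proofSet_eq h))

/-- well-definedness of the canonical neighborhood condition: for any
proof system Λ extending M^Δ and any maximal Λ-consistent set s, if |φ| = |φ'| then
(Δ(φ ∨ ψ) ∈ s for every ψ) iff (Δ(φ' ∨ ψ) ∈ s for every ψ). -/
theorem canonical_condition_well_defined {P : Type} (Λ : Sys P)
    (hequ : HasDeltaEqu Λ) (hdm : HasDeltaM Λ)
    (s : Set (Formula P)) (hs : MCS Λ s) (φ φ' : Formula P)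
    (h : proofSet Λ φ = proofSet Λ φ') :
    (∀ ψ : Formula P, Formula.delta (Formula.or φ ψ) ∈ s) ↔
    (∀ ψ : Formula P, Formula.delta (Formula.or φ' ψ) ∈ s) :=
  canonical_condition_well_defined_general Λ s hs φ φ' h
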